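/- (Example 1: E_3 = (1/3)·log_3 4). The maximum over all kernels g of 3 dimensions of the product D_g(0)·D_g(1)·D_g(2) equals 4; equivalently, the optimal exponent E_3 = max_g E(g) over bijections g of {0,1}^3 equals (1/3)·log_3 4 ≈ 0.42062. The maximum is achieved, e.g., by the linear kernel g(u) = u·G with G the 3×3 binary matrix with rows (1,0,0), (1,1,0), (0,1,1), whose partial distance sequence is (1,2,2). -/

import Mathlib

/-- The `i`-th partial distance of a kernel `g` of `ℓ` dimensions:
`D_g(i) = min { d_H(g(w•0•u), g(w•1•v)) : w ∈ {0,1}^i, u, v ∈ {0,1}^{ℓ−1−i} }`,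
phrased via pairs of inputs that agree on coordinates `< i` and differ as `0`/`1`
at coordinate `i`. -/
noncomputable def partialDist {ℓ : ℕ} (g : (Fin ℓ → ZMod 2) → (Fin ℓ → ZMod 2)) (i : ℕ) : ℕ :=
  sInf { d | ∃ x y : Fin ℓ → ZMod 2,
    (∀ j : Fin ℓ, (j : ℕ) < i → x j = y j) ∧
    (∀ j : Fin ℓ, (j : ℕ) = i → x j = 0 ∧ y j = 1) ∧
    d = hammingDist (g x) (g y) }

/-!
Over `𝔽₂ⁿ` one has `d(a, b) + d(a, b + 𝟙) = n`, so words at distance `n` are complements. Hence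
for `i < j` an injective kernel has `D(i) < ℓ`, since otherwise `e_i` and `e_i + e_j` would both
map to the complement of `g 0`; and `D(j) = ℓ` makes `g (e_i + e_j)` the complement of `g e_i`,
which squeezes `2 D(i) ≤ ℓ`. A surjective kernel also hits two words at distance one, and the
first coordinate where their preimages differ has `D(i) ≤ 1`. For `ℓ = 3` this leaves
`D(0), D(1) ≤ 2`, `D(2) ≤ 3`, with `D(2) = 3` forcing `D(0), D(1) ≤ 1`, and one `D(i) ≤ 1`:
the product is at most `2 · 2 · 1`.
-/

section PartialDist

variable {ℓ : ℕ} {g : (Fin ℓ → ZMod 2) → Fin ℓ → ZMod 2}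

def SplitAt (i : ℕ) (x y : Fin ℓ → ZMod 2) : Prop :=
  (∀ j : Fin ℓ, (j : ℕ) < i → x j = y j) ∧ (∀ j : Fin ℓ, (j : ℕ) = i → x j = 0 ∧ y j = 1)

instance (i : ℕ) (x y : Fin ℓ → ZMod 2) : Decidable (SplitAt i x y) :=
  inferInstanceAs (Decidable (_ ∧ _))

theorem SplitAt.of_apply {i : Fin ℓ} {x y : Fin ℓ → ZMod 2} (h : ∀ j : Fin ℓ, j < i → x j = y j)
    (hx : x i = 0) (hy : y i = 1) : SplitAt i x y :=
  ⟨fun j hj => h j hj, fun _ hj => Fin.ext hj ▸ ⟨hx, hy⟩⟩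

theorem splitAt_zero_single (i : Fin ℓ) : SplitAt i 0 (Pi.single i 1) :=
  .of_apply (fun j hj => by simp [hj.ne]) rfl (by simp)

theorem splitAt_zero_single_add_single {i j : Fin ℓ} (hij : i < j) :
    SplitAt i 0 (Pi.single i 1 + Pi.single j 1) :=
  .of_apply (fun k hk => by simp [hk.ne, (hk.trans hij).ne]) rfl (by simp [hij.ne])

theorem splitAt_single_single_add_single {i j : Fin ℓ} (hij : i < j) :
    SplitAt j (Pi.single i 1) (Pi.single i 1 + Pi.single j 1) :=
  .of_apply (fun k hk => by simp [hk.ne]) (by simp [hij.ne']) (by simp [hij.ne'])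

theorem exists_splitAt_of_ne {x y : Fin ℓ → ZMod 2} (hxy : x ≠ y) :
    ∃ i : Fin ℓ, SplitAt i x y ∨ SplitAt i y x := by
  have hne : (Finset.univ.filter fun j => x j ≠ y j).Nonempty := by
    obtain ⟨j, hj⟩ := Function.ne_iff.mp hxy
    exact ⟨j, by simpa using hj⟩
  set i := (Finset.univ.filter fun j => x j ≠ y j).min' hne
  have hi : x i ≠ y i := by simpa using Finset.min'_mem _ hne
  have hlt : ∀ j < i, x j = y j := fun j hj => by
    by_contra h
    exact (Finset.min'_le _ j (by simpa using h)).not_gt hj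
  refine ⟨i, ?_⟩
  rcases (by decide : ∀ a b : ZMod 2, a ≠ b → (a = 0 ∧ b = 1) ∨ (a = 1 ∧ b = 0)) _ _ hi with
    ⟨hx, hy⟩ | ⟨hx, hy⟩
  · exact .inl (.of_apply hlt hx hy)
  · exact .inr (.of_apply (fun j hj => (hlt j hj).symm) hy hx)

theorem partialDist_le_hammingDist {i : ℕ} {x y : Fin ℓ → ZMod 2} (h : SplitAt i x y) :
    partialDist g i ≤ hammingDist (g x) (g y) :=
  Nat.sInf_le ⟨x, y, h.1, h.2, rfl⟩

theorem le_partialDist {i : ℕ} (hi : i < ℓ) {k : ℕ}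
    (h : ∀ x y, SplitAt i x y → k ≤ hammingDist (g x) (g y)) : k ≤ partialDist g i := by
  have h₀ := splitAt_zero_single (⟨i, hi⟩ : Fin ℓ)
  refine le_csInf ⟨_, _, _, h₀.1, h₀.2, rfl⟩ ?_
  rintro d ⟨x, y, hlt, heq, rfl⟩
  exact h x y ⟨hlt, heq⟩

theorem partialDist_eq {i : ℕ} (hi : i < ℓ) {k : ℕ}
    (hle : ∃ x y, SplitAt i x y ∧ hammingDist (g x) (g y) ≤ k)
    (hge : ∀ x y, SplitAt i x y → k ≤ hammingDist (g x) (g y)) : partialDist g i = k := by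
  obtain ⟨x, y, hxy, hk⟩ := hle
  exact le_antisymm ((partialDist_le_hammingDist hxy).trans hk) (le_partialDist hi hge)

theorem hammingDist_add_hammingDist_add_one (a b : Fin ℓ → ZMod 2) :
    hammingDist a b + hammingDist a (b + 1) = ℓ := by
  have hcompl : ∀ s t : ZMod 2, s ≠ t + 1 ↔ ¬s ≠ t := by decide
  simp only [hammingDist, Pi.add_apply, Pi.one_apply, hcompl]
  rw [Finset.card_filter_add_card_filter_not, Finset.card_univ, Fintype.card_fin]

theorem eq_add_one_of_le_hammingDist {a b : Fin ℓ → ZMod 2} (h : ℓ ≤ hammingDist a b) :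
    b = a + 1 := by
  have := hammingDist_add_hammingDist_add_one a b
  have hab : a = b + 1 := hammingDist_eq_zero.mp (by omega)
  funext j
  simp only [hab, Pi.add_apply, Pi.one_apply, add_assoc, CharTwo.add_self_eq_zero, add_zero]

theorem partialDist_le (i : Fin ℓ) : partialDist g i ≤ ℓ :=
  (partialDist_le_hammingDist (splitAt_zero_single i)).trans
    (hammingDist_le_card_fintype.trans_eq (Fintype.card_fin ℓ))

theorem partialDist_lt_of_injective (hg : g.Injective) {i j : Fin ℓ} (hij : i < j) :
    partialDist g i < ℓ := by
  by_contra! h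
  have h₁ := eq_add_one_of_le_hammingDist
    (h.trans (partialDist_le_hammingDist (g := g) (splitAt_zero_single i)))
  have h₂ := eq_add_one_of_le_hammingDist
    (h.trans (partialDist_le_hammingDist (g := g) (splitAt_zero_single_add_single hij)))
  have := congrFun (hg (h₁.trans h₂.symm)) j
  simp [hij.ne'] at this

theorem two_mul_partialDist_le_of_le_partialDist {i j : Fin ℓ} (hij : i < j)
    (h : ℓ ≤ partialDist g j) : 2 * partialDist g i ≤ ℓ := by
  have hcompl : g (Pi.single i 1 + Pi.single j 1) = g (Pi.single i 1) + 1 :=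
    eq_add_one_of_le_hammingDist
      (h.trans (partialDist_le_hammingDist (splitAt_single_single_add_single hij)))
  have h₁ := partialDist_le_hammingDist (g := g) (splitAt_zero_single i)
  have h₂ := partialDist_le_hammingDist (g := g) (splitAt_zero_single_add_single hij)
  rw [hcompl] at h₂
  have := hammingDist_add_hammingDist_add_one (g 0) (g (Pi.single i 1))
  omega

theorem exists_partialDist_le_one (hg : g.Surjective) (hℓ : 0 < ℓ) :
    ∃ i : Fin ℓ, partialDist g i ≤ 1 := by
  obtain ⟨x, hx⟩ := hg 0
  obtain ⟨y, hy⟩ := hg (Pi.single ⟨0, hℓ⟩ 1)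
  have hdist : hammingDist (g x) (g y) = 1 := by
    rw [hx, hy, hammingDist_zero_left, hammingNorm, Finset.card_eq_one]
    refine ⟨⟨0, hℓ⟩, ?_⟩
    ext k
    simp [Pi.single_apply]
  have hxy : x ≠ y := by
    rintro rfl
    simp at hdist
  obtain ⟨i, hi | hi⟩ := exists_splitAt_of_ne hxy
  · exact ⟨i, (partialDist_le_hammingDist hi).trans_eq hdist⟩
  · exact ⟨i, (partialDist_le_hammingDist hi).trans_eq ((hammingDist_comm _ _).trans hdist)⟩

end PartialDist

theorem prod_partialDist_le_four {g : (Fin 3 → ZMod 2) → Fin 3 → ZMod 2} (hg : g.Bijective) :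
    ∏ i ∈ Finset.range 3, partialDist g i ≤ 4 := by
  have h₀ : partialDist g 0 < 3 := partialDist_lt_of_injective hg.1 (i := 0) (j := 2) (by decide)
  have h₁ : partialDist g 1 < 3 := partialDist_lt_of_injective hg.1 (i := 1) (j := 2) (by decide)
  have h₂ : partialDist g 2 ≤ 3 := partialDist_le 2
  have h₂₀ : 3 ≤ partialDist g 2 → 2 * partialDist g 0 ≤ 3 :=
    two_mul_partialDist_le_of_le_partialDist (i := 0) (j := 2) (by decide)
  have h₂₁ : 3 ≤ partialDist g 2 → 2 * partialDist g 1 ≤ 3 :=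
    two_mul_partialDist_le_of_le_partialDist (i := 1) (j := 2) (by decide)
  have hsmall : partialDist g 0 ≤ 1 ∨ partialDist g 1 ≤ 1 ∨ partialDist g 2 ≤ 1 := by
    obtain ⟨i, hi⟩ := exists_partialDist_le_one hg.2 (by norm_num)
    fin_cases i <;> simp_all
  simp only [Finset.prod_range_succ, Finset.prod_range_zero, one_mul]
  generalize partialDist g 0 = a, partialDist g 1 = b, partialDist g 2 = c at *
  interval_cases a <;> interval_cases b <;> interval_cases c <;> omega

def exampleKernel : (Fin 3 → ZMod 2) → Fin 3 → ZMod 2 :=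
  fun u => Matrix.vecMul u !![1,0,0; 1,1,0; 0,1,1]

theorem exampleKernel_bijective : exampleKernel.Bijective := by decide

theorem partialDist_exampleKernel_zero : partialDist exampleKernel 0 = 1 :=
  partialDist_eq (by norm_num) (by decide) (by decide)

theorem partialDist_exampleKernel_one : partialDist exampleKernel 1 = 2 :=
  partialDist_eq (by norm_num) (by decide) (by decide)

theorem partialDist_exampleKernel_two : partialDist exampleKernel 2 = 2 :=
  partialDist_eq (by norm_num) (by decide) (by decide)

theorem optimal_exponent_dim3 :
    IsGreatest { p : ℕ | ∃ g : (Fin 3 → ZMod 2) → (Fin 3 → ZMod 2),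
        Function.Bijective g ∧ p = ∏ i ∈ Finset.range 3, partialDist g i } 4 ∧
    (Function.Bijective
        (fun u => Matrix.vecMul u (!![1,0,0; 1,1,0; 0,1,1] : Matrix (Fin 3) (Fin 3) (ZMod 2))) ∧
      partialDist
        (fun u => Matrix.vecMul u (!![1,0,0; 1,1,0; 0,1,1] : Matrix (Fin 3) (Fin 3) (ZMod 2))) 0 = 1 ∧
      partialDist
        (fun u => Matrix.vecMul u (!![1,0,0; 1,1,0; 0,1,1] : Matrix (Fin 3) (Fin 3) (ZMod 2))) 1 = 2 ∧
      partialDist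
        (fun u => Matrix.vecMul u (!![1,0,0; 1,1,0; 0,1,1] : Matrix (Fin 3) (Fin 3) (ZMod 2))) 2 = 2) := by
  have hprod : ∏ i ∈ Finset.range 3, partialDist exampleKernel i = 4 := by
    simp [Finset.prod_range_succ, partialDist_exampleKernel_zero, partialDist_exampleKernel_one,
      partialDist_exampleKernel_two]
  refine ⟨⟨⟨exampleKernel, exampleKernel_bijective, hprod.symm⟩, ?_⟩, exampleKernel_bijective,
    partialDist_exampleKernel_zero, partialDist_exampleKernel_one, partialDist_exampleKernel_two⟩
  rintro p ⟨g, hg, rfl⟩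
  exact prod_partialDist_le_four hg
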